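/- arXiv:1705.10469 — 2 statements merged into one kernel-verified Lean document; each statement's English description precedes it below -/
import Mathlib

section
/- Two loxodromic elements A, A' ∈ SU(n,1) are conjugate in GL(n+1,ℂ) if and only if tr(A^k) = tr(A'^k) for 1 ≤ k ≤ ⌊(n+1)/2⌋. -/
/-!
The eigenvalue multiset `Λ` of `A ∈ SU(n,1)` has product `det A = 1`, and it is invariant under
`λ ↦ conj(λ)⁻¹` because `Aᴴ = H A⁻¹ H⁻¹`. Hence `e_{n+1-k}(Λ) = conj (e_k(Λ))`, so the elementary
symmetric functions `e_k(Λ)` with `k ≤ ⌊(n+1)/2⌋` determine all of them, and by Newton's identities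
these are determined by the power sums `tr(A^k)`, `k ≤ ⌊(n+1)/2⌋`. So the power sums determine the
characteristic polynomial, hence `Λ`, and diagonalizable matrices with the same `Λ` are conjugate by
a permutation of the diagonal.
-/

open Matrix Complex

/-- The Hermitian matrix of signature (n,1): H(0,n)=H(n,0)=1, H(i,i)=1 for 1 ≤ i ≤ n-1. -/
def Hm (n : ℕ) : Matrix (Fin (n+1)) (Fin (n+1)) ℂ :=
  fun i j =>
    if (i = 0 ∧ j = Fin.last n) ∨ (i = Fin.last n ∧ j = 0) then 1
    else if i = j ∧ i ≠ 0 ∧ i ≠ Fin.last n then 1 else 0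

/-- Membership in SU(n,1): determinant 1 and preservation of the form given by `Hm n`. -/
def inSU (n : ℕ) (A : Matrix (Fin (n+1)) (Fin (n+1)) ℂ) : Prop :=
  A.det = 1 ∧ Aᴴ * Hm n * A = Hm n

/-- The Hermitian form ⟨z,w⟩ = w* H z. -/
noncomputable def herm (n : ℕ) (z w : Fin (n+1) → ℂ) : ℂ :=
  star w ⬝ᵥ (Hm n).mulVec z

/-- A loxodromic element: diagonalizable with eigenvalues r e^{iθ}, r⁻¹ e^{iθ} (r > 1)
and the remaining n-1 eigenvalues of modulus 1. -/
def IsLoxodromic (n : ℕ) (A : Matrix (Fin (n+1)) (Fin (n+1)) ℂ) : Prop :=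
  ∃ (P : Matrix (Fin (n+1)) (Fin (n+1)) ℂ) (d : Fin (n+1) → ℂ) (r θ : ℝ),
    IsUnit P ∧ A = P * Matrix.diagonal d * P⁻¹ ∧ 1 < r ∧
    d 0 = (r : ℂ) * Complex.exp (θ * Complex.I) ∧
    d (Fin.last n) = (r : ℂ)⁻¹ * Complex.exp (θ * Complex.I) ∧
    ∀ i, i ≠ 0 → i ≠ Fin.last n → ‖d i‖ = 1

open Polynomial Finset

theorem Fintype.exists_perm_comp_eq_of_map_univ_eq {ι α : Type*} [Fintype ι] {f g : ι → α}
    (h : univ.val.map f = univ.val.map g) : ∃ σ : Equiv.Perm ι, g ∘ σ = f := by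
  classical
  have hfiber : ∀ a, Fintype.card {i // f i = a} = Fintype.card {i // g i = a} := by
    intro a
    simpa [Multiset.count_map, Fintype.card_subtype, Finset.card, Finset.filter_val, eq_comm]
      using congrArg (Multiset.count a) h
  exact ⟨Equiv.ofFiberEquiv fun a ↦ Fintype.equivOfCardEq (hfiber a),
    funext (Equiv.ofFiberEquiv_map _)⟩

theorem Multiset.eq_of_card_eq_of_esymm_eq {R : Type*} [CommRing R] [IsDomain R]
    {s t : Multiset R} (hcard : card s = card t) (h : ∀ j ≤ card s, s.esymm j = t.esymm j) :
    s = t := by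
  rw [← roots_multiset_prod_X_sub_C s, ← roots_multiset_prod_X_sub_C t,
    prod_X_sub_X_eq_sum_esymm, prod_X_sub_X_eq_sum_esymm, ← hcard]
  congr 1
  refine sum_congr rfl fun j hj ↦ ?_
  rw [h j (Nat.lt_succ_iff.mp (mem_range.mp hj))]

namespace Matrix

variable {ι R : Type*} [Fintype ι] [DecidableEq ι] [CommRing R]

theorem isConj_iff_exists_isUnit {A B : Matrix ι ι R} :
    IsConj A B ↔ ∃ C : Matrix ι ι R, IsUnit C ∧ C * A * C⁻¹ = B := by
  constructor
  · rintro ⟨c, hc⟩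
    exact ⟨c, c.isUnit, by rw [← coe_units_inv, hc.eq, mul_assoc, Units.mul_inv, mul_one]⟩
  · rintro ⟨C, hC, rfl⟩
    refine ⟨hC.unit, ?_⟩
    rw [SemiconjBy, IsUnit.unit_spec, mul_assoc,
      nonsing_inv_mul _ ((isUnit_iff_isUnit_det C).mp hC), mul_one]

theorem IsConj.trace_eq {A B : Matrix ι ι R} (h : IsConj A B) : A.trace = B.trace := by
  obtain ⟨C, hC, rfl⟩ := isConj_iff_exists_isUnit.mp h
  exact (trace_conj hC A).symm

theorem IsConj.det_eq {A B : Matrix ι ι R} (h : IsConj A B) : A.det = B.det := by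
  obtain ⟨C, hC, rfl⟩ := isConj_iff_exists_isUnit.mp h
  exact (det_conj hC A).symm

theorem IsConj.charpoly_eq {A B : Matrix ι ι R} (h : IsConj A B) : A.charpoly = B.charpoly := by
  obtain ⟨c, hc⟩ := h
  rw [← charpoly_units_conj c A, ← coe_units_inv, hc.eq, mul_assoc, Units.mul_inv, mul_one]

theorem IsConj.conjTranspose [StarRing R] {A B : Matrix ι ι R} (h : IsConj A B) :
    IsConj Aᴴ Bᴴ := by
  obtain ⟨c, hc⟩ := h
  refine IsConj.symm ⟨star c, ?_⟩
  rw [SemiconjBy, Units.coe_star, star_eq_conjTranspose, ← conjTranspose_mul,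
    ← conjTranspose_mul, hc.eq]

theorem IsConj.nonsing_inv {A B : Matrix ι ι R} (h : IsConj A B) : IsConj A⁻¹ B⁻¹ := by
  obtain ⟨c, hc⟩ := h
  have hc_det : IsUnit (c : Matrix ι ι R).det := (isUnit_iff_isUnit_det _).mp c.isUnit
  have hB : B = c * A * (c⁻¹ : (Matrix ι ι R)ˣ) := by
    rw [hc.eq, mul_assoc, Units.mul_inv, mul_one]
  refine ⟨c, ?_⟩
  rw [SemiconjBy, hB, mul_inv_rev, mul_inv_rev, coe_units_inv, nonsing_inv_nonsing_inv _ hc_det,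
    mul_assoc, mul_assoc, nonsing_inv_mul _ hc_det, mul_one]

theorem IsConj.trace_pow_eq_sum {d : ι → R} {A : Matrix ι ι R} (h : IsConj (diagonal d) A)
    (k : ℕ) : (A ^ k).trace = ∑ i, d i ^ k := by
  rw [← (h.pow k).trace_eq, diagonal_pow, trace_diagonal]
  rfl

theorem isConj_submatrix_equiv (M : Matrix ι ι R) (σ : Equiv.Perm ι) :
    IsConj (M.submatrix σ σ) M := by
  refine ⟨Units.map permMatrixHom (toUnits σ), ?_⟩
  rw [SemiconjBy, Units.coe_map]
  simp [PEquiv.toMatrix_toPEquiv_mul, PEquiv.mul_toMatrix_toPEquiv, Equiv.Perm.inv_def]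

theorem charpoly_diagonal_roots [IsDomain R] (d : ι → R) :
    (diagonal d).charpoly.roots = univ.val.map d := by
  rw [charpoly_diagonal, prod_eq_multiset_prod,
    ← roots_multiset_prod_X_sub_C (univ.val.map d), Multiset.map_map]
  rfl

theorem isConj_diagonal_iff [IsDomain R] {d d' : ι → R} :
    IsConj (diagonal d) (diagonal d') ↔ univ.val.map d = univ.val.map d' := by
  refine ⟨fun h ↦ ?_, fun h ↦ ?_⟩
  · rw [← charpoly_diagonal_roots, ← charpoly_diagonal_roots, h.charpoly_eq]
  · obtain ⟨σ, rfl⟩ := Fintype.exists_perm_comp_eq_of_map_univ_eq h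
    rw [← submatrix_diagonal_equiv]
    exact isConj_submatrix_equiv _ σ

end Matrix

section SymmetricFunctions

variable {ι K : Type*} [Fintype ι] [Field K]

theorem mul_esymm_map_univ_eq_sum (d : ι → K) (k : ℕ) :
    k * (univ.val.map d).esymm k = (-1) ^ (k + 1) *
      ∑ a ∈ antidiagonal k with a.1 < k,
        (-1) ^ a.1 * (univ.val.map d).esymm a.1 * ∑ i, d i ^ a.2 := by
  simpa only [map_mul, map_natCast, map_pow, map_neg, map_one, map_sum, MvPolynomial.psum,
    MvPolynomial.aeval_X, MvPolynomial.aeval_esymm_eq_multiset_esymm] using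
    congrArg (MvPolynomial.aeval d) (MvPolynomial.mul_esymm_eq_sum ι K k)

theorem esymm_map_univ_eq_of_sum_pow_eq [CharZero K] {d d' : ι → K} {m : ℕ}
    (h : ∀ k, 1 ≤ k → k ≤ m → ∑ i, d i ^ k = ∑ i, d' i ^ k) :
    ∀ j ≤ m, (univ.val.map d).esymm j = (univ.val.map d').esymm j := by
  intro j
  induction j using Nat.strong_induction_on with
  | _ j ih =>
    intro hj
    rcases Nat.eq_zero_or_pos j with rfl | hj0
    · simp [Multiset.esymm]
    refine mul_left_cancel₀ (Nat.cast_ne_zero.mpr hj0.ne') ?_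
    rw [mul_esymm_map_univ_eq_sum, mul_esymm_map_univ_eq_sum]
    congr 1
    refine sum_congr rfl fun a ha ↦ ?_
    obtain ⟨hsum, hlt⟩ := mem_filter.mp ha
    rw [HasAntidiagonal.mem_antidiagonal] at hsum
    rw [ih a.1 hlt (by omega), h a.2 (by omega) (by omega)]

theorem esymm_map_univ_card_sub {d : ι → K} (hprod : ∏ i, d i = 1) {k : ℕ}
    (hk : k ≤ Fintype.card ι) :
    (univ.val.map d).esymm (Fintype.card ι - k) = (univ.val.map d⁻¹).esymm k := by
  classical
  rw [esymm_map_val, esymm_map_val]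
  refine sum_nbij' (·ᶜ) (·ᶜ) (fun t ht ↦ ?_) (fun t ht ↦ ?_) (fun t _ ↦ compl_compl t)
    (fun t _ ↦ compl_compl t) (fun t _ ↦ ?_)
  · simp only [mem_powersetCard_univ, card_compl] at ht ⊢; omega
  · simp only [mem_powersetCard_univ, card_compl] at ht ⊢; omega
  · rw [Pi.inv_def, prod_inv_distrib]
    exact eq_inv_of_mul_eq_one_left ((prod_mul_prod_compl t d).trans hprod)

theorem esymm_map_univ_star [StarRing K] (d : ι → K) (k : ℕ) :
    (univ.val.map (star d)).esymm k = star ((univ.val.map d).esymm k) := by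
  simp only [esymm_map_val, star_sum, star_prod, Pi.star_apply]

variable [StarRing K]

theorem esymm_map_univ_card_sub_eq_star {d : ι → K} (hprod : ∏ i, d i = 1)
    (hdual : univ.val.map (star d) = univ.val.map d⁻¹) {k : ℕ} (hk : k ≤ Fintype.card ι) :
    (univ.val.map d).esymm (Fintype.card ι - k) = star ((univ.val.map d).esymm k) := by
  rw [esymm_map_univ_card_sub hprod hk, ← hdual, esymm_map_univ_star]

theorem map_univ_eq_of_sum_pow_eq [CharZero K] {d d' : ι → K}
    (hprod : ∏ i, d i = 1) (hdual : univ.val.map (star d) = univ.val.map d⁻¹)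
    (hprod' : ∏ i, d' i = 1) (hdual' : univ.val.map (star d') = univ.val.map d'⁻¹)
    (h : ∀ k, 1 ≤ k → k ≤ Fintype.card ι / 2 → ∑ i, d i ^ k = ∑ i, d' i ^ k) :
    univ.val.map d = univ.val.map d' := by
  have hlow := esymm_map_univ_eq_of_sum_pow_eq h
  refine Multiset.eq_of_card_eq_of_esymm_eq (by simp) fun j hj ↦ ?_
  rw [Multiset.card_map, card_val, card_univ] at hj
  rcases le_or_gt j (Fintype.card ι / 2) with hj2 | hj2
  · exact hlow j hj2
  obtain ⟨k, hk, rfl⟩ : ∃ k ≤ Fintype.card ι / 2, j = Fintype.card ι - k :=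
    ⟨Fintype.card ι - j, by omega, by omega⟩
  have hk' : k ≤ Fintype.card ι := hk.trans (Nat.div_le_self _ _)
  rw [esymm_map_univ_card_sub_eq_star hprod hdual hk',
    esymm_map_univ_card_sub_eq_star hprod' hdual' hk', hlow k hk]

end SymmetricFunctions

theorem Hm_eq_permMatrix (n : ℕ) : Hm n = (Equiv.swap 0 (Fin.last n)).permMatrix ℂ := by
  ext i j
  simp only [Hm, Equiv.Perm.permMatrix, PEquiv.toMatrix_apply, Equiv.toPEquiv_apply,
    Option.mem_some_iff, Equiv.swap_apply_def]
  split_ifs <;> grind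

theorem Hm_mul_self (n : ℕ) : Hm n * Hm n = 1 := by
  rw [Hm_eq_permMatrix, ← permMatrix_mul, Equiv.swap_mul_self, permMatrix_one]

theorem inSU.isConj_nonsing_inv_conjTranspose {n : ℕ} {A : Matrix (Fin (n+1)) (Fin (n+1)) ℂ}
    (hA : inSU n A) : IsConj A⁻¹ Aᴴ := by
  refine ⟨⟨Hm n, Hm n, Hm_mul_self n, Hm_mul_self n⟩, ?_⟩
  have hAinv : A * A⁻¹ = 1 := mul_nonsing_inv A (by rw [hA.1]; exact isUnit_one)
  calc Hm n * A⁻¹ = Aᴴ * Hm n * A * A⁻¹ := by rw [hA.2]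
    _ = Aᴴ * Hm n := by rw [mul_assoc, hAinv, mul_one]

theorem inSU.prod_eq_one_of_isConj_diagonal {n : ℕ} {A : Matrix (Fin (n+1)) (Fin (n+1)) ℂ}
    {d : Fin (n+1) → ℂ} (hA : inSU n A) (hd : IsConj (diagonal d) A) : ∏ i, d i = 1 := by
  rw [← det_diagonal, hd.det_eq, hA.1]

theorem inSU.map_univ_star_eq_inv_of_isConj_diagonal {n : ℕ}
    {A : Matrix (Fin (n+1)) (Fin (n+1)) ℂ} {d : Fin (n+1) → ℂ} (hA : inSU n A)
    (hd : IsConj (diagonal d) A) : univ.val.map (star d) = univ.val.map d⁻¹ := by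
  have hd0 : ∀ i, d i ≠ 0 := fun i ↦
    left_ne_zero_of_mul_eq_one ((mul_prod_erase univ d (mem_univ i)).trans
      (hA.prod_eq_one_of_isConj_diagonal hd))
  have hinv : (diagonal d)⁻¹ = diagonal d⁻¹ := inv_eq_left_inv <| by
    rw [diagonal_mul_diagonal, ← diagonal_one]
    exact congrArg diagonal (funext fun i ↦ inv_mul_cancel₀ (hd0 i))
  rw [← isConj_diagonal_iff, ← diagonal_conjTranspose, ← hinv]
  exact hd.conjTranspose.trans (hA.isConj_nonsing_inv_conjTranspose.symm.trans hd.nonsing_inv.symm)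

theorem IsLoxodromic.exists_isConj_diagonal {n : ℕ} {A : Matrix (Fin (n+1)) (Fin (n+1)) ℂ}
    (hA : IsLoxodromic n A) : ∃ d, IsConj (diagonal d) A := by
  obtain ⟨P, d, _, _, hP, hPd, _⟩ := hA
  exact ⟨d, isConj_iff_exists_isUnit.mpr ⟨P, hP, hPd.symm⟩⟩

/-- Two loxodromic elements of SU(n,1) are conjugate iff they have the same power traces
tr(A^k) for 1 ≤ k ≤ ⌊(n+1)/2⌋. -/
theorem stmt_15 (n : ℕ) (A A' : Matrix (Fin (n+1)) (Fin (n+1)) ℂ)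
    (hA : inSU n A) (hA' : inSU n A')
    (hLA : IsLoxodromic n A) (hLA' : IsLoxodromic n A') :
    (∃ C : Matrix (Fin (n+1)) (Fin (n+1)) ℂ, IsUnit C ∧ C * A * C⁻¹ = A') ↔
      (∀ k : ℕ, 1 ≤ k → k ≤ (n+1)/2 → (A ^ k).trace = (A' ^ k).trace) := by
  obtain ⟨d, hd⟩ := hLA.exists_isConj_diagonal
  obtain ⟨d', hd'⟩ := hLA'.exists_isConj_diagonal
  rw [← isConj_iff_exists_isUnit]
  refine ⟨fun h k _ _ ↦ (h.pow k).trace_eq, fun htr ↦ ?_⟩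
  have hsum : ∀ k, 1 ≤ k → k ≤ Fintype.card (Fin (n+1)) / 2 → ∑ i, d i ^ k = ∑ i, d' i ^ k := by
    intro k hk1 hk2
    rw [← hd.trace_pow_eq_sum, ← hd'.trace_pow_eq_sum, htr k hk1 (by simpa using hk2)]
  have hspec : univ.val.map d = univ.val.map d' :=
    map_univ_eq_of_sum_pow_eq (hA.prod_eq_one_of_isConj_diagonal hd)
      (hA.map_univ_star_eq_inv_of_isConj_diagonal hd) (hA'.prod_eq_one_of_isConj_diagonal hd')
      (hA'.map_univ_star_eq_inv_of_isConj_diagonal hd') hsum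
  exact hd.symm.trans ((isConj_diagonal_iff.mpr hspec).trans hd')
end

section
/- Let C ∈ SU(n,1) and let p_1,...,p_n and p_1',...,p_n' be null vectors in ℂ^{n+1} satisfying the normalization ⟨p_1,p_i⟩ = −1/√2 = ⟨p_1',p_i'⟩ and ⟨p_2,p_i⟩ = 1/√2 = ⟨p_2',p_i'⟩ for 3 ≤ i ≤ n, and ⟨p_1,p_2⟩ = 1 = ⟨p_1',p_2'⟩. If C p_i = α_i p_i' for scalars α_i (1 ≤ i ≤ n), then all α_i are equal to a common unimodular constant α with α_i = α and |α| = 1. -/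
open Matrix Complex

/-!
Since `C` preserves the form, `⟨p_i, p_j⟩ = α_i conj(α_j) ⟨p_i', p_j'⟩`, and the normalization
makes the two brackets equal and nonzero for the pairs `(1,2)`, `(1,i)`, `(2,i)` with `i ≥ 3`.
Hence `α_i conj(α_j) = 1` for all these pairs. The pairs `(1,3)` and `(2,3)` give `α_1 = α_2`,
then `(1,2)` gives `|α_1| = 1`, and `(1,i)` gives `α_i = α_1`.
-/

open ComplexConjugate

section HermitianForm

variable {n : ℕ}

lemma herm_mulVec_mulVec {C : Matrix (Fin (n+1)) (Fin (n+1)) ℂ} (hC : Cᴴ * Hm n * C = Hm n)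
    (z w : Fin (n+1) → ℂ) : herm n (C *ᵥ z) (C *ᵥ w) = herm n z w := by
  unfold herm
  rw [star_mulVec, mulVec_mulVec, dotProduct_mulVec, vecMul_vecMul, ← Matrix.mul_assoc, hC,
    ← dotProduct_mulVec]

lemma herm_smul_smul (a b : ℂ) (z w : Fin (n+1) → ℂ) :
    herm n (a • z) (b • w) = a * conj b * herm n z w := by
  simp only [herm, mulVec_smul, dotProduct_smul, star_smul, smul_dotProduct, smul_eq_mul,
    RCLike.star_def]
  ring

lemma mul_conj_eq_one_of_herm_eq {C : Matrix (Fin (n+1)) (Fin (n+1)) ℂ}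
    (hC : Cᴴ * Hm n * C = Hm n) {z w z' w' : Fin (n+1) → ℂ} {a b c : ℂ}
    (hz : C *ᵥ z = a • z') (hw : C *ᵥ w = b • w')
    (h : herm n z w = c) (h' : herm n z' w' = c) (hc : c ≠ 0) : a * conj b = 1 := by
  have hc' : a * conj b * c = c :=
    calc a * conj b * c = a * conj b * herm n z' w' := by rw [h']
      _ = herm n z w := by rw [← herm_smul_smul, ← hz, ← hw, herm_mulVec_mulVec hC]
      _ = c := h
  exact (mul_eq_right₀ hc).mp hc'

end HermitianForm

lemma mul_conj_eq_one_comm {a b : ℂ} : a * conj b = 1 ↔ b * conj a = 1 := by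
  rw [← map_eq_one_iff conj (RingHom.injective _), map_mul, conj_conj, mul_comm]

lemma eq_of_mul_conj_eq_one {a b c : ℂ} (ha : a * conj c = 1) (hb : b * conj c = 1) :
    a = b :=
  mul_right_cancel₀ (right_ne_zero_of_mul_eq_one ha) (ha.trans hb.symm)

lemma norm_eq_one_of_mul_conj_self_eq_one {a : ℂ} (h : a * conj a = 1) : ‖a‖ = 1 := by
  rw [RCLike.mul_conj] at h
  have hsq : ‖a‖ ^ 2 = 1 := Complex.ofReal_eq_one.mp (by push_cast; exact h)
  exact (pow_eq_one_iff_of_nonneg (norm_nonneg a) two_ne_zero).mp hsq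

theorem stmt_18_general (n : ℕ) (hn : 3 ≤ n) (C : Matrix (Fin (n+1)) (Fin (n+1)) ℂ) (hC : inSU n C)
    (p p' : ℕ → (Fin (n+1) → ℂ)) (α : ℕ → ℂ)
    (h12 : herm n (p 1) (p 2) = 1) (h12' : herm n (p' 1) (p' 2) = 1)
    (h1i : ∀ i, 3 ≤ i → i ≤ n → herm n (p 1) (p i) = -(1 / Real.sqrt 2))
    (h1i' : ∀ i, 3 ≤ i → i ≤ n → herm n (p' 1) (p' i) = -(1 / Real.sqrt 2))
    (h2i : ∀ i, 3 ≤ i → i ≤ n → herm n (p 2) (p i) = 1 / Real.sqrt 2)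
    (h2i' : ∀ i, 3 ≤ i → i ≤ n → herm n (p' 2) (p' i) = 1 / Real.sqrt 2)
    (hmap : ∀ i, 1 ≤ i → i ≤ n → C.mulVec (p i) = α i • p' i) :
    ∃ a : ℂ, ‖a‖ = 1 ∧ ∀ i, 1 ≤ i → i ≤ n → α i = a := by
  have hsqrt : (1 / Real.sqrt 2 : ℂ) ≠ 0 := by simp
  have hpair {i j : ℕ} (hi : 1 ≤ i ∧ i ≤ n) (hj : 1 ≤ j ∧ j ≤ n) {c : ℂ}
      (h : herm n (p i) (p j) = c) (h' : herm n (p' i) (p' j) = c) (hc : c ≠ 0) :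
      α i * conj (α j) = 1 :=
    mul_conj_eq_one_of_herm_eq hC.2 (hmap i hi.1 hi.2) (hmap j hj.1 hj.2) h h' hc
  have h1n : 1 ≤ 1 ∧ 1 ≤ n := ⟨le_rfl, by omega⟩
  have h2n : 1 ≤ 2 ∧ 2 ≤ n := ⟨by omega, by omega⟩
  have h1i_one {i : ℕ} (hi : 3 ≤ i ∧ i ≤ n) : α 1 * conj (α i) = 1 :=
    hpair h1n ⟨by omega, hi.2⟩ (h1i i hi.1 hi.2) (h1i' i hi.1 hi.2) (neg_ne_zero.mpr hsqrt)
  have h2i_one : α 2 * conj (α 3) = 1 :=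
    hpair h2n ⟨by omega, hn⟩ (h2i 3 le_rfl hn) (h2i' 3 le_rfl hn) hsqrt
  have hα12 : α 1 = α 2 := eq_of_mul_conj_eq_one (h1i_one ⟨le_rfl, hn⟩) h2i_one
  have hα11 : α 1 * conj (α 1) = 1 := by
    nth_rewrite 2 [hα12]
    exact hpair h1n h2n h12 h12' one_ne_zero
  refine ⟨α 1, norm_eq_one_of_mul_conj_self_eq_one hα11, fun i hi1 hin => ?_⟩
  rcases Nat.lt_or_ge i 3 with hi3 | hi3
  · interval_cases i
    · rfl
    · exact hα12.symm
  · exact eq_of_mul_conj_eq_one (mul_conj_eq_one_comm.mp (h1i_one ⟨hi3, hin⟩)) hα11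

/-- If C ∈ SU(n,1) maps each normalized eigenpoint p_i to a multiple α_i p_i' of the
correspondingly normalized p_i', then all α_i agree and are unimodular. -/
theorem stmt_18 (n : ℕ) (hn : 3 ≤ n) (C : Matrix (Fin (n+1)) (Fin (n+1)) ℂ) (hC : inSU n C)
    (p p' : ℕ → (Fin (n+1) → ℂ)) (α : ℕ → ℂ)
    (hpz : ∀ i, 1 ≤ i → i ≤ n → p i ≠ 0 ∧ p' i ≠ 0)
    (hnull : ∀ i, 1 ≤ i → i ≤ n → herm n (p i) (p i) = 0 ∧ herm n (p' i) (p' i) = 0)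
    (h12 : herm n (p 1) (p 2) = 1) (h12' : herm n (p' 1) (p' 2) = 1)
    (h1i : ∀ i, 3 ≤ i → i ≤ n → herm n (p 1) (p i) = -(1 / Real.sqrt 2))
    (h1i' : ∀ i, 3 ≤ i → i ≤ n → herm n (p' 1) (p' i) = -(1 / Real.sqrt 2))
    (h2i : ∀ i, 3 ≤ i → i ≤ n → herm n (p 2) (p i) = 1 / Real.sqrt 2)
    (h2i' : ∀ i, 3 ≤ i → i ≤ n → herm n (p' 2) (p' i) = 1 / Real.sqrt 2)
    (hmap : ∀ i, 1 ≤ i → i ≤ n → C.mulVec (p i) = α i • p' i) :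
    ∃ a : ℂ, ‖a‖ = 1 ∧ ∀ i, 1 ≤ i → i ≤ n → α i = a :=
  stmt_18_general n hn C hC p p' α h12 h12' h1i h1i' h2i h2i' hmap
end
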